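/- arXiv:math/0011171 — 2 statements merged into one kernel-verified Lean document; each statement's English description precedes it below -/
import Mathlib

section
/- Let k be a finite field of characteristic 2 and let η = ∑_{j ≤ N} η_j t^j be a Laurent series over k in t^{-1}. If η = y^2 + y for some Laurent series y ∈ k((t^{-1})), then for every odd positive integer j_0 one has ∑_{m=0}^{∞} (η_{2^m j_0})^{2^{-m}} = 0, where c^{2^{-m}} denotes the unique 2^m-th root of c in k and the sum is finite since η_j = 0 for j > N. -/
/-!
Write `c_m` for the coefficient of `y` at `t^{2^m j₀}` (index `-(2^m j₀)` in `LaurentSeries`).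
In characteristic 2 the square `y²` has coefficient `c_m²` at `t^{2^{m+1} j₀}` and vanishes at
odd exponents, so comparing coefficients in `η = y² + y` gives `η_{j₀} = c_0` and
`η_{2^{m+1} j₀} = c_m² + c_{m+1}`. Taking `2^{m+1}`-th roots, the sum telescopes to
`c_N^{2^{-N}}`. Finally `c_N = 0`: a pole of order `v > 0` of `y` gives one of order `2v` of `y² + y`
(with the squared leading coefficient), so `2v ≤ N < 2^{N+1} j₀`.
-/

open Finset

lemma CharTwo.sum_mul_fst_snd_eq_sum_diag {Γ R : Type*} [DecidableEq Γ] [CommSemiring R]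
    [CharP R 2]
    {s : Finset (Γ × Γ)} (f : Γ → R) (hswap : ∀ ij ∈ s, ij.swap ∈ s) :
    ∑ ij ∈ s, f ij.1 * f ij.2 = ∑ ij ∈ s with ij.1 = ij.2, f ij.1 * f ij.2 := by
  have hoff : ∑ ij ∈ s with ¬ij.1 = ij.2, f ij.1 * f ij.2 = 0 := by
    refine sum_involution (fun ij _ => ij.swap) (fun ij _ => ?_) (fun ij hij _ hfix => ?_)
      (fun ij hij => ?_) (fun ij _ => ij.swap_swap)
    · rw [Prod.fst_swap, Prod.snd_swap, mul_comm]
      exact CharTwo.add_self_eq_zero _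
    · exact (mem_filter.1 hij).2 (congrArg Prod.snd hfix)
    · rw [mem_filter] at hij ⊢
      exact ⟨hswap ij hij.1, Ne.symm hij.2⟩
  rw [← sum_filter_add_sum_filter_not s (fun ij => ij.1 = ij.2), hoff, add_zero]

namespace HahnSeries

variable {Γ R : Type*} [AddCommMonoid Γ] [CommSemiring R] [CharP R 2]

lemma coeff_mul_self_eq_sum_diag [PartialOrder Γ] [IsOrderedCancelAddMonoid Γ] [DecidableEq Γ]
    (x : HahnSeries Γ R) (g : Γ) :
    (x * x).coeff g = ∑ ij ∈ Finset.antidiagonal x.isPWO_support x.isPWO_support g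
      with ij.1 = ij.2, x.coeff ij.1 * x.coeff ij.2 := by
  rw [coeff_mul]
  refine CharTwo.sum_mul_fst_snd_eq_sum_diag _ fun ij hij => ?_
  rw [Finset.mem_antidiagonal] at hij ⊢
  exact ⟨hij.2.1, hij.1, by rw [Prod.fst_swap, Prod.snd_swap, add_comm]; exact hij.2.2⟩

lemma coeff_mul_self_eq_zero_of_ne_add_self [PartialOrder Γ] [IsOrderedCancelAddMonoid Γ]
    (x : HahnSeries Γ R) {g : Γ} (hg : ∀ a, a + a ≠ g) : (x * x).coeff g = 0 := by
  classical
  rw [coeff_mul_self_eq_sum_diag]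
  refine sum_eq_zero fun ij hij => ?_
  rw [mem_filter, Finset.mem_antidiagonal] at hij
  exact absurd (hij.2 ▸ hij.1.2.2) (hg ij.2)

lemma coeff_mul_self_add_self [LinearOrder Γ] [IsOrderedCancelAddMonoid Γ]
    (x : HahnSeries Γ R) (a : Γ) : (x * x).coeff (a + a) = x.coeff a ^ 2 := by
  rw [coeff_mul_self_eq_sum_diag, sq]
  refine sum_eq_single (a, a) (fun ij hij hne => ?_) fun hnot => ?_
  · rw [mem_filter, Finset.mem_antidiagonal] at hij
    have hdouble : ij.2 + ij.2 = a + a := hij.2 ▸ hij.1.2.2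
    have hsnd : ij.2 = a := (strictMono_id.add strictMono_id).injective hdouble
    exact absurd (Prod.ext (hij.2.trans hsnd) hsnd) hne
  · have : x.coeff a = 0 := by
      by_contra ha
      exact hnot (mem_filter.2 ⟨Finset.mem_antidiagonal.2 ⟨ha, ha, rfl⟩, rfl⟩)
    simp [this]

lemma coeff_sq_add_self_two_mul_order_ne_zero [LinearOrder Γ] [IsOrderedCancelAddMonoid Γ]
    [NoZeroDivisors R] {y : HahnSeries Γ R} (hy : y.order < 0) : (y ^ 2 + y).coeff (y.order + y.order) ≠ 0 := by
  have hy0 : y ≠ 0 := by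
    rintro rfl
    exact hy.ne order_zero
  rw [coeff_add, sq, coeff_mul_self_add_self,
    coeff_eq_zero_of_lt_order (add_lt_of_neg_left _ hy), add_zero]
  exact pow_ne_zero 2 (mt coeff_order_eq_zero.1 hy0)

end HahnSeries

lemma LaurentSeries.coeff_eq_zero_of_two_mul_lt {K : Type*} [Field K] [CharP K 2] {N : ℕ}
    {y : LaurentSeries K} (hN : ∀ j : ℤ, (N : ℤ) < j → (y ^ 2 + y).coeff (-j) = 0)
    {n : ℤ} (hn : 2 * n < -N) : y.coeff n = 0 := by
  refine HahnSeries.coeff_eq_zero_of_lt_order (lt_of_not_ge fun hle => ?_)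
  have hneg : y.order < 0 := by omega
  refine HahnSeries.coeff_sq_add_self_two_mul_order_ne_zero hneg ?_
  simpa using hN (-(y.order + y.order)) (by omega)

lemma sum_iterate_frobeniusEquiv_symm_eq_of_telescope {R : Type*} [CommSemiring R] [CharP R 2]
    [PerfectRing R 2] {c e : ℕ → R} (h0 : e 0 = c 0) (hsucc : ∀ m, e (m + 1) = c m ^ 2 + c (m + 1))
    (M : ℕ) :
    ∑ m ∈ range (M + 1), (frobeniusEquiv R 2).symm^[m] (e m) =
      (frobeniusEquiv R 2).symm^[M] (c M) := by
  induction M with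
  | zero => simp [h0]
  | succ M ih =>
    rw [sum_range_succ, ih, hsucc, iterate_map_add, Function.iterate_succ_apply,
      frobeniusEquiv_symm_pow, ← add_assoc, CharTwo.add_self_eq_zero, zero_add]

theorem stmt_8_general (k : Type*) [Field k] [ExpChar k 2] [PerfectRing k 2]
    (N : ℕ) (η y : LaurentSeries k)
    (hN : ∀ j : ℤ, (N : ℤ) < j → η.coeff (-j) = 0)
    (hy : η = y ^ 2 + y)
    (j0 : ℤ) (hodd : Odd j0) (hpos : 0 < j0) :
    ∑ m ∈ Finset.range (N + 1),
      ((frobeniusEquiv k 2).symm)^[m] (η.coeff (-(2 ^ m * j0))) = 0 := by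
  have : CharP k 2 := by cases ‹ExpChar k 2›; assumption
  subst hy
  have h0 : (y ^ 2 + y).coeff (-(2 ^ 0 * j0)) = y.coeff (-(2 ^ 0 * j0)) := by
    obtain ⟨r, rfl⟩ := hodd
    rw [HahnSeries.coeff_add, sq, HahnSeries.coeff_mul_self_eq_zero_of_ne_add_self _ (by omega),
      zero_add]
  have hsucc (m : ℕ) : (y ^ 2 + y).coeff (-(2 ^ (m + 1) * j0)) =
      y.coeff (-(2 ^ m * j0)) ^ 2 + y.coeff (-(2 ^ (m + 1) * j0)) := by
    rw [HahnSeries.coeff_add, sq, ← HahnSeries.coeff_mul_self_add_self]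
    ring_nf
  have hlast : y.coeff (-(2 ^ N * j0)) = 0 := by
    refine LaurentSeries.coeff_eq_zero_of_two_mul_lt hN ?_
    have : (N : ℤ) < 2 ^ N := by exact_mod_cast N.lt_two_pow_self
    nlinarith
  rw [sum_iterate_frobeniusEquiv_symm_eq_of_telescope h0 hsucc, hlast]
  exact Function.iterate_fixed (map_zero _) N

/-- If `η = y² + y` in `k((t⁻¹))` with `η_j = 0` for `j > N`, then for every odd
positive `j₀` the (finite) sum `∑ₘ (η_{2^m j₀})^{2^{-m}}` vanishes; the sum over
`m ∈ range (N+1)` includes all possibly nonzero terms since `η_{2^m j₀} = 0`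
for `2^m j₀ > N`. -/
theorem stmt_8 (k : Type*) [Field k] [Fintype k] [ExpChar k 2] [PerfectRing k 2]
    (N : ℕ) (η y : LaurentSeries k)
    (hN : ∀ j : ℤ, (N : ℤ) < j → η.coeff (-j) = 0)
    (hy : η = y ^ 2 + y)
    (j0 : ℤ) (hodd : Odd j0) (hpos : 0 < j0) :
    ∑ m ∈ Finset.range (N + 1),
      ((frobeniusEquiv k 2).symm)^[m] (η.coeff (-(2 ^ m * j0))) = 0 :=
  stmt_8_general k N η y hN hy j0 hodd hpos
end

section
/- The polynomial x(t) = t^22 + t^21 + t^20 + t^19 + t^18 + t^16 + t^14 + x_1 t^12 + t^11 + (x_1+1) t^10 + x_1 t^8 + x_1 t^6 + (x_1+1) t^4 + x_1^2 t^2 + x_1^2 t + x_0 over k = F_{2^12}, with x_1^2 + x_1 + 1 = 0 and x_0^4 + x_0 = x_1, has the property that x(t)^3 + t^65 + a_6 is of the form y(t)^2 + y(t) for some polynomial y ∈ k[t] of degree 33, for every a_6 ∈ k of absolute trace 1. -/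
open Polynomial in
set_option maxHeartbeats 4000000 in
set_option maxRecDepth 10000 in
theorem stmt_19 (k : Type*) [Field k] [Fintype k] (hk : Fintype.card k = 4096)
    (a6 : k) (ha6 : ∑ m ∈ Finset.range 12, a6 ^ (2 ^ m) = 1)
    (x1 x0 : k) (h1 : x1 ^ 2 + x1 + 1 = 0) (h0 : x0 ^ 4 + x0 = x1) :
    ∃ y : Polynomial k, y.natDegree = 33 ∧
      (X ^ 22 + X ^ 21 + X ^ 20 + X ^ 19 + X ^ 18 + X ^ 16 + X ^ 14
        + C x1 * X ^ 12 + X ^ 11 + C (x1 + 1) * X ^ 10 + C x1 * X ^ 8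
        + C x1 * X ^ 6 + C (x1 + 1) * X ^ 4 + C (x1 ^ 2) * X ^ 2
        + C (x1 ^ 2) * X + C x0) ^ 3 + X ^ 65 + C a6 = y ^ 2 + y := by
  classical
  -- characteristic 2
  have hchar : ringChar k = 2 := by
    obtain ⟨n, hp, hc⟩ := FiniteField.card k (ringChar k)
    rw [hk] at hc
    have hdvd : ringChar k ∣ 2 ^ 12 := by
      rw [show (2:ℕ)^12 = 4096 from rfl, hc]
      exact dvd_pow_self _ (by exact_mod_cast n.ne_zero)
    have := hp.dvd_of_dvd_pow hdvd
    exact (Nat.prime_dvd_prime_iff_eq hp Nat.prime_two).mp this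
  haveI hCP : CharP k 2 := hchar ▸ ringChar.charP k
  haveI : Fact (Nat.Prime 2) := ⟨Nat.prime_two⟩
  have h2 : (2 : k) = 0 := by
    have := CharP.cast_eq_zero k 2
    exact_mod_cast this
  have hq : ∀ w : k, w ^ 4096 = w := fun w => by
    rw [← hk]; exact FiniteField.pow_card w
  have apc : ∀ (a b : k) (m : ℕ), (a + b) ^ 2 ^ m = a ^ 2 ^ m + b ^ 2 ^ m :=
    fun a b m => add_pow_char_pow a b 2 m
  -- trace of x0^3 is 1
  have h16 : x0 ^ 16 = x0 := by
    linear_combination (x1^2+(-4)*x1*x0+(-1)*x1+(6)*x0^2+(4)*x0)*h1 + (x1^3+x1^2*x0^4+(-3)*x1^2*x0+x1*x0^8+(-2)*x1*x0^5+(3)*x1*x0^2+x0^12+(-1)*x0^9+x0^6+(-1)*x0^3+1)*h0 + ((-2)*x1*x0^3+(-3)*x1*x0^2+x1+(-3)*x0^2+(-3)*x0)*h2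
  have e16 : (x0 ^ 3) ^ 16 = x0 ^ 3 := by
    rw [← pow_mul, mul_comm, pow_mul, h16]
  have e32 : (x0 ^ 3) ^ 32 = (x0 ^ 3) ^ 2 := by
    rw [show (32:ℕ) = 16 * 2 from rfl, pow_mul, e16]
  have e64 : (x0 ^ 3) ^ 64 = (x0 ^ 3) ^ 4 := by
    rw [show (64:ℕ) = 16 * 4 from rfl, pow_mul, e16]
  have e128 : (x0 ^ 3) ^ 128 = (x0 ^ 3) ^ 8 := by
    rw [show (128:ℕ) = 16 * 8 from rfl, pow_mul, e16]
  have e256 : (x0 ^ 3) ^ 256 = x0 ^ 3 := by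
    rw [show (256:ℕ) = 16 * 16 from rfl, pow_mul, e16, e16]
  have e512 : (x0 ^ 3) ^ 512 = (x0 ^ 3) ^ 2 := by
    rw [show (512:ℕ) = 16 * 32 from rfl, pow_mul, e16, e32]
  have e1024 : (x0 ^ 3) ^ 1024 = (x0 ^ 3) ^ 4 := by
    rw [show (1024:ℕ) = 16 * 64 from rfl, pow_mul, e16, e64]
  have e2048 : (x0 ^ 3) ^ 2048 = (x0 ^ 3) ^ 8 := by
    rw [show (2048:ℕ) = 16 * 128 from rfl, pow_mul, e16, e128]
  have htr : ∑ m ∈ Finset.range 12, (x0 ^ 3) ^ 2 ^ m = 1 := by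
    simp only [Finset.sum_range_succ, Finset.sum_range_zero, zero_add]
    norm_num
    rw [e16, e32, e64, e128, e256, e512, e1024, e2048]
    linear_combination ((3)*x1^4+(-18)*x1^3*x0+(-3)*x1^3+(45)*x1^2*x0^2+(18)*x1^2*x0+(-60)*x1*x0^3+(-45)*x1*x0^2+(51)*x1+(60)*x0^3+(-90)*x0+(-51))*h1 + ((3)*x1^5+(3)*x1^4*x0^4+(-15)*x1^4*x0+(3)*x1^3*x0^8+(-12)*x1^3*x0^5+(30)*x1^3*x0^2+(3)*x1^2*x0^12+(-9)*x1^2*x0^9+(18)*x1^2*x0^6+(-30)*x1^2*x0^3+(48)*x1^2+(3)*x1*x0^16+(-6)*x1*x0^13+(9)*x1*x0^10+(-12)*x1*x0^7+(18)*x1*x0^4+(-24)*x1*x0+(3)*x0^20+(-3)*x0^17+(3)*x0^14+(-3)*x0^11+(6)*x0^8+(-6)*x0^5+(9)*x0^2)*h0 + ((39)*x1*x0^2+(45)*x1*x0+(-33)*x0^3+(45)*x0+(25))*h2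
  -- the Artin-Schreier image and the trace-zero set
  set S : Finset k := Finset.univ.image (fun w : k => w ^ 2 + w) with hS
  set T : Finset k := Finset.univ.filter
      (fun w : k => ∑ m ∈ Finset.range 12, w ^ 2 ^ m = 0) with hT
  have hST : S ⊆ T := by
    intro b hb
    rw [hS] at hb
    obtain ⟨w, -, hw⟩ := Finset.mem_image.mp hb
    rw [hT, Finset.mem_filter]
    refine ⟨Finset.mem_univ _, ?_⟩
    subst hw
    have key : ∀ m : ℕ, (w ^ 2 + w) ^ 2 ^ m = w ^ 2 ^ (m + 1) + w ^ 2 ^ m := by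
      intro m
      rw [apc]
      congr 1
      rw [← pow_mul, ← pow_succ']
    have hsum : ∑ m ∈ Finset.range 12, (w ^ 2 + w) ^ 2 ^ m
        = ∑ m ∈ Finset.range 12, (w ^ 2 ^ (m + 1) + w ^ 2 ^ m) :=
      Finset.sum_congr rfl fun m _ => key m
    rw [hsum]
    simp only [Finset.sum_add_distrib, Finset.sum_range_succ, Finset.sum_range_zero, zero_add]
    norm_num
    linear_combination hq w + (w^2048+w^1024+w^512+w^256+w^128+w^64+w^32+w^16+w^8+w^4+w^2+w)*h2
  have hcardS : 2 * S.card = 4096 := by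
    have hfib : ∀ b ∈ S, (Finset.univ.filter (fun w : k => w ^ 2 + w = b)).card = 2 := by
      intro b hb
      rw [hS] at hb
      obtain ⟨w0, -, hw0⟩ := Finset.mem_image.mp hb
      have hfe : Finset.univ.filter (fun w : k => w ^ 2 + w = b) = {w0, w0 + 1} := by
        ext w
        simp only [Finset.mem_filter, Finset.mem_univ, true_and, Finset.mem_insert,
          Finset.mem_singleton]
        constructor
        · intro hw
          have hzz : (w - w0) * (w - (w0 + 1)) = 0 := by
            linear_combination hw - hw0 + (w0^2 + w0 - w*w0 - w)*h2
          rcases mul_eq_zero.mp hzz with h | h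
          · exact Or.inl (sub_eq_zero.mp h)
          · exact Or.inr (sub_eq_zero.mp h)
        · rintro (rfl | rfl)
          · exact hw0
          · linear_combination hw0 + (w0 + 1)*h2
      rw [hfe, Finset.card_insert_of_notMem, Finset.card_singleton]
      simp only [Finset.mem_singleton]
      intro hcon
      exact one_ne_zero (α := k) (by linear_combination -hcon)
    have hcnt := Finset.card_eq_sum_card_image (fun w : k => w ^ 2 + w) Finset.univ
    rw [Finset.card_univ, hk, ← hS, Finset.sum_congr rfl hfib, Finset.sum_const,
      smul_eq_mul] at hcnt
    omega
  have hcardT : T.card ≤ 2048 := by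
    set P : Polynomial k := X^1 + X^2 + X^4 + X^8 + X^16 + X^32 + X^64 + X^128 + X^256
        + X^512 + X^1024 + X^2048 with hP
    have hPdeg : P.natDegree = 2048 := by
      rw [hP]; compute_degree!
    have hP0 : P ≠ 0 := fun h => by rw [h] at hPdeg; simp at hPdeg
    have hsub : T ⊆ P.roots.toFinset := by
      intro w hw
      rw [hT, Finset.mem_filter] at hw
      rw [Multiset.mem_toFinset, Polynomial.mem_roots hP0]
      have hw2 := hw.2
      simp only [Finset.sum_range_succ, Finset.sum_range_zero, zero_add] at hw2
      norm_num at hw2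
      rw [Polynomial.IsRoot, hP]
      simp only [Polynomial.eval_add, Polynomial.eval_pow, Polynomial.eval_X]
      linear_combination hw2
    calc T.card ≤ P.roots.toFinset.card := Finset.card_le_card hsub
      _ ≤ Multiset.card P.roots := Multiset.toFinset_card_le _
      _ ≤ P.natDegree := P.card_roots'
      _ = 2048 := hPdeg
  have hTS : T = S := by
    exact (Finset.eq_of_subset_of_card_le hST (by omega)).symm
  -- solve for the constant coefficient
  have hcT : (x0 ^ 3 + a6) ∈ T := by
    rw [hT, Finset.mem_filter]
    refine ⟨Finset.mem_univ _, ?_⟩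
    have hsum : ∑ m ∈ Finset.range 12, (x0 ^ 3 + a6) ^ 2 ^ m
        = ∑ m ∈ Finset.range 12, ((x0 ^ 3) ^ 2 ^ m + a6 ^ 2 ^ m) :=
      Finset.sum_congr rfl fun m _ => apc _ _ m
    rw [hsum, Finset.sum_add_distrib, htr, ha6]
    linear_combination h2
  obtain ⟨z, -, hz⟩ := Finset.mem_image.mp (hS ▸ (hTS ▸ hcT))
  -- the explicit solution polynomial
  refine ⟨X^33 + X^31 + X^29 + C x1*X^28 + X^28 + X^27 + C x1*X^26 + X^26 + C x1*X^24 + X^24 + C x1*X^22 + C x0^2*X^22 + C x1*X^21 + C x0^2*X^21 + X^21 + C x1*X^20 + C x0^2*X^20 + X^20 + C x1*X^19 + C x0^2*X^19 + C x1*X^18 + C x0^2*X^18 + X^18 + C x1*X^17 + C x0^2*X^16 + C x1*X^15 + C x1*X^14 + C x0^2*X^14 + X^14 + C x1*C x0^2*X^12 + C x1*X^12 + X^12 + C x0^2*X^11 + C x1*C x0^2*X^10 + C x0^2*X^10 + X^9 + C x1*C x0^2*X^8 + X^8 + C x1*C x0^2*X^6 + X^6 + X^5 + C x1*C x0^2*X^4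 + C x0^2*X^4 + X^3 + C x1*C x0^2*X^2 + C x1*X^2 + C x0^2*X^2 + X^2 + C x1*C x0^2*X^1 + C x0^2*X^1 + C z, ?_, ?_⟩
  · compute_degree!
  · have hC1 : (C x1)^2 + C x1 + 1 = (0 : Polynomial k) := by
      have := congrArg C h1
      simpa using this
    have hC2 : (C x0)^4 + C x0 + C x1 = (0 : Polynomial k) := by
      have hx : x0^4 + x0 + x1 = 0 := by linear_combination h0 + x1*h2
      have := congrArg C hx
      simpa using this
    have hC0 : (C z)^2 + C z = (C x0)^3 + C a6 := by
      have := congrArg C hz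
      simpa using this
    have h2P : (2 : Polynomial k) = 0 := by
      rw [← map_ofNat (C : k →+* Polynomial k) 2, h2, map_zero]
    simp only [map_add, map_pow, map_one]
    linear_combination (-1)*(((-1)*(C x1)^4*(X)^6+(-3)*(C x1)^4*(X)^5+(-3)*(C x1)^4*(X)^4+(-1)*(C x1)^4*(X)^3+(-3)*(C x1)^3*(X)^16+(-6)*(C x1)^3*(X)^15+(-6)*(C x1)^3*(X)^14+(-6)*(C x1)^3*(X)^13+(-6)*(C x1)^3*(X)^12+(-6)*(C x1)^3*(X)^11+(-6)*(C x1)^3*(X)^10+(-6)*(C x1)^3*(X)^9+(-6)*(C x1)^3*(X)^8+(-6)*(C x1)^3*(X)^7+(-2)*(C x1)^3*(X)^6+(3)*(C x1)^3*(X)^5+(3)*(C x1)^3*(X)^4+(C x1)^3*(X)^3+(-3)*(C x1)^2*(C x0)*(X)^4+(-6)*(C x1)^2*(C x0)*(X)^3+(-3)*(C x1)^2*(C x0)*(X)^2+(-6)*(C x1)^2*(X)^26+(-12)*(C x1)^2*(X)^25+(-18)*(C x1)^2*(X)^24+(-18)*(C x1)^2*(X)^23+(-21)*(C x1)^2*(X)^22+(-18)*(C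 x1)^2*(X)^21+(-18)*(C x1)^2*(X)^20+(-18)*(C x1)^2*(X)^19+(-21)*(C x1)^2*(X)^18+(-21)*(C x1)^2*(X)^17+(-12)*(C x1)^2*(X)^16+(-9)*(C x1)^2*(X)^15+(-12)*(C x1)^2*(X)^14+(-12)*(C x1)^2*(X)^13+(-3)*(C x1)^2*(X)^12+(3)*(C x1)^2*(X)^10+(3)*(C x1)^2*(X)^9+(3)*(C x1)^2*(X)^8+(-6)*(C x1)*(C x0)*(X)^14+(-6)*(C x1)*(C x0)*(X)^13+(-6)*(C x1)*(C x0)*(X)^12+(-6)*(C x1)*(C x0)*(X)^11+(-6)*(C x1)*(C x0)*(X)^10+(-6)*(C x1)*(C x0)*(X)^9+(-6)*(C x1)*(C x0)*(X)^8+(-6)*(C x1)*(C x0)*(X)^7+(-6)*(C x1)*(C x0)*(X)^6+(-6)*(C x1)*(C x0)*(X)^5+(3)*(C x1)*(C x0)*(X)^4+(6)*(C x1)*(C x0)*(X)^3+(3)*(C x1)*(C x0)*(X)^2+(-7)*(C x1)*(X)^36+(-12)*(C x1)*(X)^35+(-21)*(C x1)*(X)^34+(-24)*(C x1)*(X)^33+(-36)*(C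 x1)*(X)^32+(-30)*(C x1)*(X)^31+(-46)*(C x1)*(X)^30+(-36)*(C x1)*(X)^29+(-57)*(C x1)*(X)^28+(-42)*(C x1)*(X)^27+(-48)*(C x1)*(X)^26+(-24)*(C x1)*(X)^25+(-37)*(C x1)*(X)^24+(-12)*(C x1)*(X)^23+(-21)*(C x1)*(X)^22+(-6)*(C x1)*(X)^21+(-15)*(C x1)*(X)^20+(-7)*(C x1)*(X)^18+(3)*(C x1)*(X)^17+(-9)*(C x1)*(X)^16+(3)*(C x1)*(X)^15+(9)*(C x1)*(X)^14+(12)*(C x1)*(X)^13+(2)*(C x1)*(X)^12+(-3)*(C x1)*(X)^10+(-3)*(C x1)*(X)^9+(3)*(C x1)*(X)^8+(6)*(C x1)*(X)^7+(2)*(C x1)*(X)^6+(-3)*(C x1)*(X)^5+(-3)*(C x1)*(X)^4+(-1)*(C x1)*(X)^3+(C x0)^4*(X)^24+(2)*(C x0)^4*(X)^22+(3)*(C x0)^4*(X)^20+(4)*(C x0)^4*(X)^18+(5)*(C x0)^4*(X)^16+(6)*(C x0)^4*(X)^14+(2)*(C x0)^4*(X)^13+(5)*(C x0)^4*(X)^12+(2)*(C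 x0)^4*(X)^11+(4)*(C x0)^4*(X)^10+(2)*(C x0)^4*(X)^9+(3)*(C x0)^4*(X)^8+(2)*(C x0)^4*(X)^7+(2)*(C x0)^4*(X)^6+(2)*(C x0)^4*(X)^5+(C x0)^4*(X)^4+(2)*(C x0)^4*(X)^3+(C x0)^4*(X)^2+(2)*(C x0)^2*(X)^40+(4)*(C x0)^2*(X)^38+(6)*(C x0)^2*(X)^36+(8)*(C x0)^2*(X)^34+(2)*(C x0)^2*(X)^33+(10)*(C x0)^2*(X)^32+(4)*(C x0)^2*(X)^31+(12)*(C x0)^2*(X)^30+(8)*(C x0)^2*(X)^29+(10)*(C x0)^2*(X)^28+(10)*(C x0)^2*(X)^27+(10)*(C x0)^2*(X)^26+(10)*(C x0)^2*(X)^25+(10)*(C x0)^2*(X)^24+(10)*(C x0)^2*(X)^23+(10)*(C x0)^2*(X)^22+(8)*(C x0)^2*(X)^21+(8)*(C x0)^2*(X)^20+(6)*(C x0)^2*(X)^19+(6)*(C x0)^2*(X)^18+(2)*(C x0)^2*(X)^17+(6)*(C x0)^2*(X)^16+(2)*(C x0)^2*(X)^15+(4)*(C x0)^2*(X)^14+(2)*(C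 x0)^2*(X)^13+(2)*(C x0)^2*(X)^12+(2)*(C x0)^2*(X)^10+(2)*(C x0)^2*(X)^8+(2)*(C x0)^2*(X)^6+(2)*(C x0)^2*(X)^4+(2)*(C x0)^2*(X)^3+(-3)*(C x0)^2*(X)^2+(-3)*(C x0)^2*(X)+(-9)*(C x0)*(X)^24+(-12)*(C x0)*(X)^23+(-18)*(C x0)*(X)^22+(-12)*(C x0)*(X)^21+(-21)*(C x0)*(X)^20+(-6)*(C x0)*(X)^19+(-18)*(C x0)*(X)^18+(-6)*(C x0)*(X)^17+(-21)*(C x0)*(X)^16+(-6)*(C x0)*(X)^15+(-6)*(C x0)*(X)^14+(-15)*(C x0)*(X)^12+(6)*(C x0)*(X)^9+(3)*(C x0)*(X)^8+(6)*(C x0)*(X)^7+(X)^56+(2)*(X)^54+(3)*(X)^52+(4)*(X)^50+(2)*(X)^49+(5)*(X)^48+(4)*(X)^47+(-6)*(X)^45+(-19)*(X)^44+(-22)*(X)^43+(-38)*(X)^42+(-34)*(X)^41+(-48)*(X)^40+(-40)*(X)^39+(-63)*(X)^38+(-48)*(X)^37+(-62)*(X)^36+(-36)*(X)^35+(-67)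*(X)^34+(-32)*(X)^33+(-52)*(X)^32+(-24)*(X)^31+(-30)*(X)^30+(-11)*(X)^28+(-2)*(X)^27+(-15)*(X)^26+(2)*(X)^25+(4)*(X)^24+(-5)*(X)^22+(5)*(X)^21+(X)^20+(7)*(X)^19+(11)*(X)^18+(10)*(X)^17+(X)^16+(-4)*(X)^15+(-1)*(X)^14+(-2)*(X)^13+(-5)*(X)^12+(-2)*(X)^11+(-3)*(X)^10+(-3)*(X)^9+(-7)*(X)^8+(-6)*(X)^7+(-4)*(X)^6+(X)^5+(3)*(X)^4+(-1)*(X)^3+(-1)*(X)^2))*hC1 + (-1)*(((2)*(C x1)*(X)^34+(2)*(C x1)*(X)^33+(4)*(C x1)*(X)^32+(4)*(C x1)*(X)^31+(6)*(C x1)*(X)^30+(4)*(C x1)*(X)^29+(8)*(C x1)*(X)^28+(4)*(C x1)*(X)^27+(10)*(C x1)*(X)^26+(4)*(C x1)*(X)^25+(9)*(C x1)*(X)^24+(8)*(C x1)*(X)^23+(10)*(C x1)*(X)^22+(6)*(C x1)*(X)^21+(7)*(C x1)*(X)^20+(4)*(C x1)*(X)^19+(2)*(C x1)*(X)^18+(4)*(C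 x1)*(X)^17+(C x1)*(X)^16+(4)*(C x1)*(X)^15+(2)*(C x1)*(X)^13+(3)*(C x1)*(X)^12+(2)*(C x1)*(X)^11+(C x1)*(X)^8+(2)*(C x1)*(X)^6+(2)*(C x1)*(X)^5+(C x1)*(X)^4+(2)*(C x1)*(X)^3+(C x1)*(X)^2+(X)^44+(2)*(X)^43+(3)*(X)^42+(4)*(X)^41+(5)*(X)^40+(4)*(X)^39+(5)*(X)^38+(4)*(X)^37+(5)*(X)^36+(4)*(X)^35+(4)*(X)^34+(4)*(X)^33+(7)*(X)^32+(4)*(X)^31+(6)*(X)^30+(4)*(X)^29+(3)*(X)^28+(2)*(X)^27+(4)*(X)^26+(4)*(X)^25+(5)*(X)^24+(6)*(X)^23+(5)*(X)^22+(6)*(X)^21+(4)*(X)^20+(2)*(X)^19+(2)*(X)^17+(-3)*(X)^16+(4)*(X)^15+(-4)*(X)^14+(-1)*(X)^12+(-4)*(X)^10+(-2)*(X)^9+(-2)*(X)^8+(-2)*(X)^7))*hC2 + (-1)*((1))*hC0 + (-1)*(((C x1)*(C x0)^2*(C z)*(X)^12+(C x1)*(C x0)^2*(C z)*(X)^10+(C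 x1)*(C x0)^2*(C z)*(X)^8+(C x1)*(C x0)^2*(C z)*(X)^6+(C x1)*(C x0)^2*(C z)*(X)^4+(C x1)*(C x0)^2*(C z)*(X)^2+(C x1)*(C x0)^2*(C z)*(X)+(C x1)*(C x0)^2*(X)^50+(C x1)*(C x0)^2*(X)^49+(2)*(C x1)*(C x0)^2*(X)^48+(2)*(C x1)*(C x0)^2*(X)^47+(3)*(C x1)*(C x0)^2*(X)^46+(3)*(C x1)*(C x0)^2*(X)^45+(4)*(C x1)*(C x0)^2*(X)^44+(5)*(C x1)*(C x0)^2*(X)^43+(6)*(C x1)*(C x0)^2*(X)^42+(7)*(C x1)*(C x0)^2*(X)^41+(7)*(C x1)*(C x0)^2*(X)^40+(10)*(C x1)*(C x0)^2*(X)^39+(7)*(C x1)*(C x0)^2*(X)^38+(10)*(C x1)*(C x0)^2*(X)^37+(7)*(C x1)*(C x0)^2*(X)^36+(10)*(C x1)*(C x0)^2*(X)^35+(6)*(C x1)*(C x0)^2*(X)^34+(9)*(C x1)*(C x0)^2*(X)^33+(6)*(C x1)*(C x0)^2*(X)^32+(6)*(C x1)*(C x0)^2*(X)^31+(6)*(C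 x1)*(C x0)^2*(X)^30+(3)*(C x1)*(C x0)^2*(X)^29+(6)*(C x1)*(C x0)^2*(X)^28+(-1)*(C x1)*(C x0)^2*(X)^27+(3)*(C x1)*(C x0)^2*(X)^26+(C x1)*(C x0)^2*(X)^25+(3)*(C x1)*(C x0)^2*(X)^24+(C x1)*(C x0)^2*(X)^23+(5)*(C x1)*(C x0)^2*(X)^22+(2)*(C x1)*(C x0)^2*(X)^21+(3)*(C x1)*(C x0)^2*(X)^20+(2)*(C x1)*(C x0)^2*(X)^19+(4)*(C x1)*(C x0)^2*(X)^18+(2)*(C x1)*(C x0)^2*(X)^17+(5)*(C x1)*(C x0)^2*(X)^16+(4)*(C x1)*(C x0)^2*(X)^15+(3)*(C x1)*(C x0)^2*(X)^14+(5)*(C x1)*(C x0)^2*(X)^13+(2)*(C x1)*(C x0)^2*(X)^12+(3)*(C x1)*(C x0)^2*(X)^11+(2)*(C x1)*(C x0)^2*(X)^10+(3)*(C x1)*(C x0)^2*(X)^9+(3)*(C x1)*(C x0)^2*(X)^7+(C x1)*(C x0)^2*(X)^6+(C x1)*(C x0)^2*(X)^5+(C x1)*(C x0)^2*(X)^4+(C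 x1)*(C x0)^2*(X)^3+(2)*(C x1)*(C x0)^2*(X)^2+(2)*(C x1)*(C x0)^2*(X)+(-4)*(C x1)*(C x0)*(X)^34+(-4)*(C x1)*(C x0)*(X)^33+(-8)*(C x1)*(C x0)*(X)^32+(-8)*(C x1)*(C x0)*(X)^31+(-12)*(C x1)*(C x0)*(X)^30+(-8)*(C x1)*(C x0)*(X)^29+(-16)*(C x1)*(C x0)*(X)^28+(-8)*(C x1)*(C x0)*(X)^27+(-20)*(C x1)*(C x0)*(X)^26+(-8)*(C x1)*(C x0)*(X)^25+(-12)*(C x1)*(C x0)*(X)^24+(-4)*(C x1)*(C x0)*(X)^23+(-8)*(C x1)*(C x0)*(X)^22+(-2)*(C x1)*(C x0)*(X)^20+(-2)*(C x1)*(C x0)*(X)^19+(2)*(C x1)*(C x0)*(X)^18+(-2)*(C x1)*(C x0)*(X)^17+(4)*(C x1)*(C x0)*(X)^16+(-2)*(C x1)*(C x0)*(X)^15+(2)*(C x1)*(C x0)*(X)^13+(6)*(C x1)*(C x0)*(X)^12+(2)*(C x1)*(C x0)*(X)^11+(-2)*(C x1)*(C x0)*(X)^8+(2)*(C x1)*(C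 x0)*(X)^6+(2)*(C x1)*(C x0)*(X)^5+(-2)*(C x1)*(C x0)*(X)^4+(-4)*(C x1)*(C x0)*(X)^3+(-2)*(C x1)*(C x0)*(X)^2+(C x1)*(C z)*(X)^28+(C x1)*(C z)*(X)^26+(C x1)*(C z)*(X)^24+(C x1)*(C z)*(X)^22+(C x1)*(C z)*(X)^21+(C x1)*(C z)*(X)^20+(C x1)*(C z)*(X)^19+(C x1)*(C z)*(X)^18+(C x1)*(C z)*(X)^17+(C x1)*(C z)*(X)^15+(C x1)*(C z)*(X)^14+(C x1)*(C z)*(X)^12+(C x1)*(C z)*(X)^2+(C x1)*(X)^61+(2)*(C x1)*(X)^59+(3)*(C x1)*(X)^57+(-1)*(C x1)*(X)^56+(C x1)*(X)^55+(-4)*(C x1)*(X)^54+(-5)*(C x1)*(X)^53+(-10)*(C x1)*(X)^52+(-11)*(C x1)*(X)^51+(-17)*(C x1)*(X)^50+(-17)*(C x1)*(X)^49+(-23)*(C x1)*(X)^48+(-23)*(C x1)*(X)^47+(-25)*(C x1)*(X)^46+(-20)*(C x1)*(X)^45+(-24)*(C x1)*(X)^44+(-14)*(C x1)*(X)^43+(-16)*(C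 x1)*(X)^42+(-9)*(C x1)*(X)^41+(-9)*(C x1)*(X)^40+(-4)*(C x1)*(X)^39+(-2)*(C x1)*(X)^37+(2)*(C x1)*(X)^36+(4)*(C x1)*(X)^35+(17)*(C x1)*(X)^34+(12)*(C x1)*(X)^33+(21)*(C x1)*(X)^32+(16)*(C x1)*(X)^31+(18)*(C x1)*(X)^30+(11)*(C x1)*(X)^29+(21)*(C x1)*(X)^28+(18)*(C x1)*(X)^27+(23)*(C x1)*(X)^26+(7)*(C x1)*(X)^25+(10)*(C x1)*(X)^24+(7)*(C x1)*(X)^23+(10)*(C x1)*(X)^22+(-1)*(C x1)*(X)^21+(7)*(C x1)*(X)^20+(-5)*(C x1)*(X)^19+(-4)*(C x1)*(X)^18+(-4)*(C x1)*(X)^17+(6)*(C x1)*(X)^16+(-1)*(C x1)*(X)^14+(-5)*(C x1)*(X)^13+(C x1)*(X)^12+(2)*(C x1)*(X)^11+(6)*(C x1)*(X)^10+(4)*(C x1)*(X)^9+(4)*(C x1)*(X)^8+(2)*(C x1)*(X)^7+(C x1)*(X)^6+(2)*(C x1)*(X)^5+(C x1)*(X)^4+(C x1)*(X)^3+(C x1)*(X)^2+(C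 x0)^2*(C z)*(X)^22+(C x0)^2*(C z)*(X)^21+(C x0)^2*(C z)*(X)^20+(C x0)^2*(C z)*(X)^19+(C x0)^2*(C z)*(X)^18+(C x0)^2*(C z)*(X)^16+(C x0)^2*(C z)*(X)^14+(C x0)^2*(C z)*(X)^11+(C x0)^2*(C z)*(X)^10+(C x0)^2*(C z)*(X)^4+(C x0)^2*(C z)*(X)^2+(C x0)^2*(C z)*(X)+(C x0)^2*(X)^55+(C x0)^2*(X)^54+(2)*(C x0)^2*(X)^53+(2)*(C x0)^2*(X)^52+(3)*(C x0)^2*(X)^51+(3)*(C x0)^2*(X)^50+(5)*(C x0)^2*(X)^49+(4)*(C x0)^2*(X)^48+(6)*(C x0)^2*(X)^47+(4)*(C x0)^2*(X)^46+(5)*(C x0)^2*(X)^45+(4)*(C x0)^2*(X)^44+(5)*(C x0)^2*(X)^43+(6)*(C x0)^2*(X)^42+(4)*(C x0)^2*(X)^41+(5)*(C x0)^2*(X)^40+(5)*(C x0)^2*(X)^39+(3)*(C x0)^2*(X)^38+(5)*(C x0)^2*(X)^37+(C x0)^2*(X)^36+(5)*(C x0)^2*(X)^35+(2)*(C x0)^2*(X)^34+(3)*(C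 x0)^2*(X)^33+(C x0)^2*(X)^32+(4)*(C x0)^2*(X)^31+(2)*(C x0)^2*(X)^30+(C x0)^2*(X)^29+(4)*(C x0)^2*(X)^28+(2)*(C x0)^2*(X)^25+(2)*(C x0)^2*(X)^24+(C x0)^2*(X)^23+(2)*(C x0)^2*(X)^22+(-1)*(C x0)^2*(X)^21+(-1)*(C x0)^2*(X)^20+(C x0)^2*(X)^19+(-1)*(C x0)^2*(X)^18+(C x0)^2*(X)^17+(C x0)^2*(X)^16+(C x0)^2*(X)^15+(-1)*(C x0)^2*(X)^14+(3)*(C x0)^2*(X)^13+(C x0)^2*(X)^12+(C x0)^2*(X)^10+(2)*(C x0)^2*(X)^9+(3)*(C x0)^2*(X)^7+(C x0)^2*(X)^6+(C x0)^2*(X)^5+(2)*(C x0)^2*(X)^2+(2)*(C x0)^2*(X)+(-2)*(C x0)*(X)^44+(-4)*(C x0)*(X)^43+(-6)*(C x0)*(X)^42+(-8)*(C x0)*(X)^41+(-10)*(C x0)*(X)^40+(-8)*(C x0)*(X)^39+(-10)*(C x0)*(X)^38+(-8)*(C x0)*(X)^37+(-10)*(C x0)*(X)^36+(-8)*(C x0)*(X)^35+(-8)*(C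 x0)*(X)^34+(-8)*(C x0)*(X)^33+(-14)*(C x0)*(X)^32+(-8)*(C x0)*(X)^31+(-12)*(C x0)*(X)^30+(-8)*(C x0)*(X)^29+(-6)*(C x0)*(X)^28+(-4)*(C x0)*(X)^27+(-8)*(C x0)*(X)^26+(-8)*(C x0)*(X)^25+(-4)*(C x0)*(X)^24+(2)*(C x0)*(X)^22+(4)*(C x0)*(X)^20+(2)*(C x0)*(X)^19+(6)*(C x0)*(X)^18+(2)*(C x0)*(X)^17+(12)*(C x0)*(X)^16+(-2)*(C x0)*(X)^15+(2)*(C x0)*(X)^14+(8)*(C x0)*(X)^12+(2)*(C x0)*(X)^10+(-2)*(C x0)*(X)^9+(-2)*(C x0)*(X)^8+(-2)*(C x0)*(X)^7+(C z)*(X)^33+(C z)*(X)^31+(C z)*(X)^29+(C z)*(X)^28+(C z)*(X)^27+(C z)*(X)^26+(C z)*(X)^24+(C z)*(X)^21+(C z)*(X)^20+(C z)*(X)^18+(C z)*(X)^14+(C z)*(X)^12+(C z)*(X)^9+(C z)*(X)^8+(C z)*(X)^6+(C z)*(X)^5+(C z)*(X)^3+(C z)*(X)^2+(-2)*(X)^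65+(-2)*(X)^64+(-5)*(X)^63+(-6)*(X)^62+(-8)*(X)^61+(-9)*(X)^60+(-10)*(X)^59+(-12)*(X)^58+(-11)*(X)^57+(-14)*(X)^56+(-12)*(X)^55+(-17)*(X)^54+(-15)*(X)^53+(-20)*(X)^52+(-18)*(X)^51+(-21)*(X)^50+(-16)*(X)^49+(-20)*(X)^48+(-16)*(X)^47+(-19)*(X)^46+(-11)*(X)^45+(-8)*(X)^44+(-5)*(X)^43+(4)*(X)^42+(6)*(X)^41+(11)*(X)^40+(12)*(X)^39+(26)*(X)^38+(18)*(X)^37+(23)*(X)^36+(14)*(X)^35+(28)*(X)^34+(15)*(X)^33+(26)*(X)^32+(11)*(X)^31+(15)*(X)^30+(X)^29+(4)*(X)^28+(3)*(X)^27+(10)*(X)^26+(-3)*(X)^25+(-2)*(X)^24+(4)*(X)^23+(3)*(X)^22+(3)*(X)^20+(-4)*(X)^19+(-5)*(X)^18+(-2)*(X)^17+(X)^16+(4)*(X)^15+(4)*(X)^14+(2)*(X)^13+(4)*(X)^12+(4)*(X)^11+(3)*(X)^10+(3)*(X)^9+(6)*(X)^8+(4)*(X)^7+(3)*(X)^6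+(X)^5+(-1)*(X)^4+(X)^3+(X)^2))*h2P
end
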